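/- Let H and G be real Hilbert spaces, let A : H → 2^H and B : G → 2^G be maximally monotone, let L : H → G be a nonzero bounded linear operator, let z ∈ H and r ∈ G, and suppose z is in the range of x ↦ Ax + L*(B(Lx − r)). Let (a_{1,n}), (b_{1,n}), (c_{1,n}) be absolutely summable sequences in H and (a_{2,n}), (b_{2,n}), (c_{2,n}) absolutely summable sequences in G. Let x_0 ∈ H, v_0 ∈ G, ε ∈ (0, 1/(‖L‖+1)), let (γ_n) be a sequence in [ε, (1−ε)/‖L‖], and define for every n: y_{1,n} = x_n − γ_n(L*v_n + a_{1,n}); y_{2,n} = v_n + γ_n(L x_n + a_{2,n}); p_{1,n} = J_{γ_n A}(y_{1,n} + γ_n z) + b_{1,n}; p_{2,n} = J_{γ_n B^{-1}}(y_{2,n} − γ_n r) + b_{2,n}; q_{1,n} = p_{1,n} − γ_n(L*p_{2,n} + c_{1,n}); q_{2,n} = p_{2,n} + γ_n(L p_{1,n} + c_{2,n}); x_{n+1} = x_n − y_{1,n} + q_{1,n}; v_{n+1} = v_n − y_{2,n} + q_{2,n}. Then x_n − p_{1,n} → 0 in H and v_n − p_{2,n} → 0 in G (strong convergence). -/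
import Mathlib

open scoped InnerProductSpace
open Filter Topology

/-- Monotonicity of a set-valued operator on a real inner product space. -/
def MonotoneSV {H : Type*} [NormedAddCommGroup H] [InnerProductSpace ℝ H]
    (A : H → Set H) : Prop :=
  ∀ x y u v : H, u ∈ A x → v ∈ A y → 0 ≤ ⟪x - y, u - v⟫_ℝ

/-- Maximal monotonicity of a set-valued operator on a real inner product space. -/
def MaxMonotone {H : Type*} [NormedAddCommGroup H] [InnerProductSpace ℝ H]
    (A : H → Set H) : Prop :=
  MonotoneSV A ∧ ∀ x u : H, (∀ y v : H, v ∈ A y → (0:ℝ) ≤ ⟪x - y, u - v⟫_ℝ) → u ∈ A x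

/-- `J` is the resolvent `(Id + γ A)⁻¹` of `γ A`. -/
def IsResolvent {E : Type*} [AddCommGroup E] [Module ℝ E]
    (γ : ℝ) (A : E → Set E) (J : E → E) : Prop :=
  ∀ w, ∃ u ∈ A (J w), w = J w + γ • u

/-- Weak convergence of a sequence in an inner product space. -/
def WeakTendsto {H : Type*} [NormedAddCommGroup H] [InnerProductSpace ℝ H]
    (x : ℕ → H) (l : H) : Prop :=
  ∀ w : H, Filter.Tendsto (fun n => ⟪x n, w⟫_ℝ) Filter.atTop (nhds ⟪l, w⟫_ℝ)

lemma resolvent_nonexp {E : Type*} [NormedAddCommGroup E] [InnerProductSpace ℝ E]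
    {A : E → Set E} (hA : MonotoneSV A) {γ : ℝ} (hγ : 0 < γ) {J : E → E}
    (hJ : IsResolvent γ A J) (w w' : E) : ‖J w - J w'‖ ≤ ‖w - w'‖ := by
  obtain ⟨u, hu, hw⟩ := hJ w
  obtain ⟨u', hu', hw'⟩ := hJ w'
  have hm := hA _ _ _ _ hu hu'
  have key : ‖J w - J w'‖ ^ 2 ≤ ⟪J w - J w', w - w'⟫_ℝ := by
    have hsub : w - w' = (J w - J w') + γ • (u - u') := by
      conv_lhs => rw [hw, hw']
      module
    rw [hsub, inner_add_right, real_inner_self_eq_norm_sq, real_inner_smul_right]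
    nlinarith [mul_nonneg hγ.le hm]
  have cs := real_inner_le_norm (J w - J w') (w - w')
  nlinarith [norm_nonneg (J w - J w'), norm_nonneg (w - w')]

lemma inv_monotone {G : Type*} [NormedAddCommGroup G] [InnerProductSpace ℝ G]
    {B : G → Set G} (hB : MonotoneSV B) : MonotoneSV (fun w => {g : G | w ∈ B g}) := by
  intro x y u v hu hv
  have := hB u v x y hu hv
  rwa [real_inner_comm]

lemma keyIneq {H G : Type*} [NormedAddCommGroup H] [InnerProductSpace ℝ H] [CompleteSpace H]
    [NormedAddCommGroup G] [InnerProductSpace ℝ G] [CompleteSpace G]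
    {A : H → Set H} (hA : MonotoneSV A) {B : G → Set G} (hB : MonotoneSV B)
    (L : H →L[ℝ] G) (z : H) (r : G)
    (xs u : H) (hu : u ∈ A xs) (vs : G) (hvs : vs ∈ B (L xs - r))
    (hz : z = u + ContinuousLinearMap.adjoint L vs)
    (γ ε : ℝ) (hγ0 : 0 < γ) (hγL : γ * ‖L‖ ≤ 1 - ε) (hε0 : 0 < ε) (hε1 : ε ≤ 1)
    (xn P₁ : H) (vn P₂ : G)
    (u₁ : H) (hu₁ : u₁ ∈ A P₁)
    (hw₁ : xn - γ • ContinuousLinearMap.adjoint L (vn) + γ • z = P₁ + γ • u₁)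
    (u₂ : G) (hu₂ : P₂ ∈ B u₂)
    (hw₂ : vn + γ • L xn - γ • r = P₂ + γ • u₂) :
    ‖P₁ + γ • ContinuousLinearMap.adjoint L (vn - P₂) - xs‖ ^ 2
      + ‖P₂ - γ • L (xn - P₁) - vs‖ ^ 2
      ≤ ‖xn - xs‖ ^ 2 + ‖vn - vs‖ ^ 2 - ε * (‖xn - P₁‖ ^ 2 + ‖vn - P₂‖ ^ 2) := by
  set L' := ContinuousLinearMap.adjoint L with hL'def
  have hL'norm : ‖L'‖ = ‖L‖ := LinearIsometryEquiv.norm_map ContinuousLinearMap.adjoint L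
  have hu' : u = z - L' vs := by rw [hz]; abel
  have hγu₁ : γ • u₁ = xn - γ • L' vn + γ • z - P₁ := by rw [hw₁]; abel
  have hγu₂ : γ • u₂ = vn + γ • L xn - γ • r - P₂ := by rw [hw₂]; abel
  have hq1 : (0:ℝ) ≤ ⟪P₁ - xs, (xn - P₁) - γ • L' (vn - vs)⟫_ℝ := by
    have h := mul_nonneg hγ0.le (hA _ _ _ _ hu₁ hu)
    rw [← real_inner_smul_right] at h
    have heq : γ • (u₁ - u) = (xn - P₁) - γ • L' (vn - vs) := by
      rw [smul_sub, hγu₁, hu', map_sub]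
      module
    rwa [heq] at h
  have hq2 : (0:ℝ) ≤ ⟪P₂ - vs, (vn - P₂) + γ • L (xn - xs)⟫_ℝ := by
    have h := mul_nonneg hγ0.le (hB _ _ _ _ hu₂ hvs)
    rw [real_inner_comm, ← real_inner_smul_right] at h
    have heq : γ • (u₂ - (L xs - r)) = (vn - P₂) + γ • L (xn - xs) := by
      rw [smul_sub, hγu₂, map_sub]
      module
    rwa [heq] at h
  have hs₁ : γ * ⟪L (P₁ - xs), vn - P₂⟫_ℝ + γ * ⟪L (P₁ - xs), P₂ - vs⟫_ℝ
      ≤ ⟪P₁ - xs, xn - P₁⟫_ℝ := by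
    have hsplit : (vn - vs) = (vn - P₂) + (P₂ - vs) := by abel
    rw [inner_sub_right, real_inner_smul_right, ContinuousLinearMap.adjoint_inner_right,
      hsplit, inner_add_right] at hq1
    linarith
  have hs₂ : -(γ * ⟪P₂ - vs, L (xn - P₁)⟫_ℝ) - γ * ⟪P₂ - vs, L (P₁ - xs)⟫_ℝ
      ≤ ⟪P₂ - vs, vn - P₂⟫_ℝ := by
    have hsplit : xn - xs = (xn - P₁) + (P₁ - xs) := by abel
    rw [inner_add_right, real_inner_smul_right, hsplit, map_add, inner_add_right] at hq2
    linarith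
  have hXe : ‖P₁ + γ • L' (vn - P₂) - xs‖ ^ 2
      = ‖P₁ - xs‖ ^ 2 + 2 * (γ * ⟪L (P₁ - xs), vn - P₂⟫_ℝ) + γ ^ 2 * ‖L' (vn - P₂)‖ ^ 2 := by
    have h : P₁ + γ • L' (vn - P₂) - xs = (P₁ - xs) + γ • L' (vn - P₂) := by abel
    rw [h, norm_add_sq_real, real_inner_smul_right, ContinuousLinearMap.adjoint_inner_right,
      norm_smul, Real.norm_eq_abs, abs_of_pos hγ0, mul_pow]
  have hVe : ‖P₂ - γ • L (xn - P₁) - vs‖ ^ 2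
      = ‖P₂ - vs‖ ^ 2 - 2 * (γ * ⟪P₂ - vs, L (xn - P₁)⟫_ℝ) + γ ^ 2 * ‖L (xn - P₁)‖ ^ 2 := by
    have h : P₂ - γ • L (xn - P₁) - vs = (P₂ - vs) - γ • L (xn - P₁) := by abel
    rw [h, norm_sub_sq_real, real_inner_smul_right, norm_smul, Real.norm_eq_abs,
      abs_of_pos hγ0, mul_pow]
  have hΦ₁ : ‖xn - xs‖ ^ 2
      = ‖P₁ - xs‖ ^ 2 + 2 * ⟪P₁ - xs, xn - P₁⟫_ℝ + ‖xn - P₁‖ ^ 2 := by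
    have h : xn - xs = (P₁ - xs) + (xn - P₁) := by abel
    rw [h, norm_add_sq_real]
  have hΦ₂ : ‖vn - vs‖ ^ 2
      = ‖P₂ - vs‖ ^ 2 + 2 * ⟪P₂ - vs, vn - P₂⟫_ℝ + ‖vn - P₂‖ ^ 2 := by
    have h : vn - vs = (P₂ - vs) + (vn - P₂) := by abel
    rw [h, norm_add_sq_real]
  have hn₁ : γ * ‖L (xn - P₁)‖ ≤ (1 - ε) * ‖xn - P₁‖ := by
    calc γ * ‖L (xn - P₁)‖ ≤ γ * (‖L‖ * ‖xn - P₁‖) :=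
          mul_le_mul_of_nonneg_left (L.le_opNorm _) hγ0.le
      _ = γ * ‖L‖ * ‖xn - P₁‖ := by ring
      _ ≤ (1 - ε) * ‖xn - P₁‖ := mul_le_mul_of_nonneg_right hγL (norm_nonneg _)
  have hn₂ : γ * ‖L' (vn - P₂)‖ ≤ (1 - ε) * ‖vn - P₂‖ := by
    calc γ * ‖L' (vn - P₂)‖ ≤ γ * (‖L‖ * ‖vn - P₂‖) := by
          refine mul_le_mul_of_nonneg_left ?_ hγ0.le
          calc ‖L' (vn - P₂)‖ ≤ ‖L'‖ * ‖vn - P₂‖ := L'.le_opNorm _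
            _ = ‖L‖ * ‖vn - P₂‖ := by rw [hL'norm]
      _ = γ * ‖L‖ * ‖vn - P₂‖ := by ring
      _ ≤ (1 - ε) * ‖vn - P₂‖ := mul_le_mul_of_nonneg_right hγL (norm_nonneg _)
  have hsq₁ : γ ^ 2 * ‖L (xn - P₁)‖ ^ 2 ≤ (1 - ε) ^ 2 * ‖xn - P₁‖ ^ 2 := by
    have h := pow_le_pow_left₀ (mul_nonneg hγ0.le (norm_nonneg (L (xn - P₁)))) hn₁ 2
    calc γ ^ 2 * ‖L (xn - P₁)‖ ^ 2 = (γ * ‖L (xn - P₁)‖) ^ 2 := by ring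
      _ ≤ ((1 - ε) * ‖xn - P₁‖) ^ 2 := h
      _ = (1 - ε) ^ 2 * ‖xn - P₁‖ ^ 2 := by ring
  have hsq₂ : γ ^ 2 * ‖L' (vn - P₂)‖ ^ 2 ≤ (1 - ε) ^ 2 * ‖vn - P₂‖ ^ 2 := by
    have h := pow_le_pow_left₀ (mul_nonneg hγ0.le (norm_nonneg (L' (vn - P₂)))) hn₂ 2
    calc γ ^ 2 * ‖L' (vn - P₂)‖ ^ 2 = (γ * ‖L' (vn - P₂)‖) ^ 2 := by ring
      _ ≤ ((1 - ε) * ‖vn - P₂‖) ^ 2 := h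
      _ = (1 - ε) ^ 2 * ‖vn - P₂‖ ^ 2 := by ring
  have hee : (1 - ε) ^ 2 ≤ 1 - ε := by
    have h1 : (0:ℝ) ≤ 1 - ε := by linarith
    calc (1 - ε) ^ 2 = (1 - ε) * (1 - ε) := by ring
      _ ≤ (1 - ε) * 1 := mul_le_mul_of_nonneg_left (by linarith) h1
      _ = 1 - ε := mul_one _
  have he₁ : (1 - ε) ^ 2 * ‖xn - P₁‖ ^ 2 ≤ (1 - ε) * ‖xn - P₁‖ ^ 2 :=
    mul_le_mul_of_nonneg_right hee (sq_nonneg _)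
  have he₂ : (1 - ε) ^ 2 * ‖vn - P₂‖ ^ 2 ≤ (1 - ε) * ‖vn - P₂‖ ^ 2 :=
    mul_le_mul_of_nonneg_right hee (sq_nonneg _)
  have c : γ * ⟪L (P₁ - xs), P₂ - vs⟫_ℝ = γ * ⟪P₂ - vs, L (P₁ - xs)⟫_ℝ := by
    rw [real_inner_comm]
  rw [hXe, hVe, hΦ₁, hΦ₂]
  linarith [hs₁, hs₂, hsq₁, hsq₂, he₁, he₂, c]

lemma le_of_sq_add_sq_le {a b c : ℝ} (ha : 0 ≤ a) (hc : 0 ≤ c) (h : a^2 + b^2 ≤ c^2) :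
    a ≤ c := by nlinarith [sq_nonneg b]

lemma fejer_aux {a b A Bv e1 e2 M K Et : ℝ}
    (ha : 0 ≤ a) (hb : 0 ≤ b) (he1 : 0 ≤ e1) (he2 : 0 ≤ e2)
    (h1 : a ≤ A + e1) (h2 : b ≤ Bv + e2)
    (hAnn : 0 ≤ A) (hBnn : 0 ≤ Bv)
    (hs : A^2 + Bv^2 ≤ K)
    (hA : A ≤ M) (hB : Bv ≤ M)
    (her : e1 + e2 ≤ Et) :
    a^2 + b^2 ≤ K + (2*M + Et) * (e1 + e2) := by
  nlinarith [mul_nonneg he1 he2, mul_le_mul_of_nonneg_right hA he1,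
    mul_le_mul_of_nonneg_right hB he2,
    mul_le_mul_of_nonneg_right her (add_nonneg he1 he2), sq_nonneg (e1+e2)]

set_option maxHeartbeats 1000000 in
theorem stmt_12 {H G : Type*} [NormedAddCommGroup H] [InnerProductSpace ℝ H] [CompleteSpace H]
    [NormedAddCommGroup G] [InnerProductSpace ℝ G] [CompleteSpace G]
    (A : H → Set H) (hA : MaxMonotone A)
    (B : G → Set G) (hB : MaxMonotone B)
    (L : H →L[ℝ] G) (hL : L ≠ 0) (z : H) (r : G)
    (hran : ∃ x : H, ∃ u ∈ A x, ∃ w ∈ B (L x - r),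
      z = u + ContinuousLinearMap.adjoint L w)
    (a₁ b₁ c₁ : ℕ → H) (a₂ b₂ c₂ : ℕ → G)
    (ha₁ : Summable fun n => ‖a₁ n‖) (hb₁ : Summable fun n => ‖b₁ n‖)
    (hc₁ : Summable fun n => ‖c₁ n‖)
    (ha₂ : Summable fun n => ‖a₂ n‖) (hb₂ : Summable fun n => ‖b₂ n‖)
    (hc₂ : Summable fun n => ‖c₂ n‖)
    (ε : ℝ) (hε : ε ∈ Set.Ioo (0:ℝ) (1 / (‖L‖ + 1)))
    (γ : ℕ → ℝ) (hγ : ∀ n, γ n ∈ Set.Icc ε ((1 - ε) / ‖L‖))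
    (JA : ℕ → H → H) (hJA : ∀ n, IsResolvent (γ n) A (JA n))
    (JB : ℕ → G → G) (hJB : ∀ n, IsResolvent (γ n) (fun w => {g : G | w ∈ B g}) (JB n))
    (x y₁ p₁ q₁ : ℕ → H) (v y₂ p₂ q₂ : ℕ → G)
    (hy₁ : ∀ n, y₁ n = x n - γ n • (ContinuousLinearMap.adjoint L (v n) + a₁ n))
    (hy₂ : ∀ n, y₂ n = v n + γ n • (L (x n) + a₂ n))
    (hp₁ : ∀ n, p₁ n = JA n (y₁ n + γ n • z) + b₁ n)
    (hp₂ : ∀ n, p₂ n = JB n (y₂ n - γ n • r) + b₂ n)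
    (hq₁ : ∀ n, q₁ n = p₁ n - γ n • (ContinuousLinearMap.adjoint L (p₂ n) + c₁ n))
    (hq₂ : ∀ n, q₂ n = p₂ n + γ n • (L (p₁ n) + c₂ n))
    (hx : ∀ n, x (n + 1) = x n - y₁ n + q₁ n)
    (hv : ∀ n, v (n + 1) = v n - y₂ n + q₂ n)
    :
    Filter.Tendsto (fun n => x n - p₁ n) Filter.atTop (nhds 0) ∧
      Filter.Tendsto (fun n => v n - p₂ n) Filter.atTop (nhds 0) := by
  
  obtain ⟨hε0, hεlt⟩ := hε
  obtain ⟨xs, u, hu, vs, hvs, hz⟩ := hran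
  have hL0 : (0:ℝ) < ‖L‖ := norm_pos_iff.mpr hL
  have hε1 : ε ≤ 1 := by
    have h1 : 1 / (‖L‖ + 1) ≤ 1 := by
      rw [div_le_one (by linarith)]
      linarith
    linarith
  have hγpos : ∀ n, 0 < γ n := fun n => lt_of_lt_of_le hε0 (hγ n).1
  have hγL : ∀ n, γ n * ‖L‖ ≤ 1 - ε := fun n => (le_div_iff₀ hL0).mp (hγ n).2
  set Γ : ℝ := (1 - ε) / ‖L‖ with hΓdef
  have hΓ0 : 0 ≤ Γ := div_nonneg (by linarith) hL0.le
  have hγΓ : ∀ n, γ n ≤ Γ := fun n => (hγ n).2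
  set L' := ContinuousLinearMap.adjoint L with hL'def
  have hL'norm : ‖L'‖ = ‖L‖ := LinearIsometryEquiv.norm_map ContinuousLinearMap.adjoint L
  have hBinv : MonotoneSV (fun w => {g : G | w ∈ B g}) := inv_monotone hB.1
  set P₁ : ℕ → H := fun n => JA n (x n - γ n • L' (v n) + γ n • z) with hP₁def
  set P₂ : ℕ → G := fun n => JB n (v n + γ n • L (x n) - γ n • r) with hP₂def
  have hP₁n : ∀ n, P₁ n = JA n (x n - γ n • L' (v n) + γ n • z) := fun n => rfl
  have hP₂n : ∀ n, P₂ n = JB n (v n + γ n • L (x n) - γ n • r) := fun n => rfl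
  set Δ : ℕ → ℝ := fun n => ‖x n - P₁ n‖ ^ 2 + ‖v n - P₂ n‖ ^ 2 with hΔdef
  set Φ : ℕ → ℝ := fun n => ‖x n - xs‖ ^ 2 + ‖v n - vs‖ ^ 2 with hΦdef
  set XX : ℕ → H := fun n => P₁ n + γ n • L' (v n - P₂ n) with hXXdef
  set VV : ℕ → G := fun n => P₂ n - γ n • L (x n - P₁ n) with hVVdef
  set α₁ : ℕ → ℝ := fun n => Γ * ‖a₁ n‖ + ‖b₁ n‖ with hα₁def
  set α₂ : ℕ → ℝ := fun n => Γ * ‖a₂ n‖ + ‖b₂ n‖ with hα₂def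
  set E₁ : ℕ → ℝ := fun n => α₁ n + Γ * ‖L‖ * α₂ n + Γ * (‖a₁ n‖ + ‖c₁ n‖) with hE₁def
  set E₂ : ℕ → ℝ := fun n => α₂ n + Γ * ‖L‖ * α₁ n + Γ * (‖a₂ n‖ + ‖c₂ n‖) with hE₂def
  set err : ℕ → ℝ := fun n => E₁ n + E₂ n with herrdef
  have hα₁nn : ∀ n, 0 ≤ α₁ n := fun n =>
    add_nonneg (mul_nonneg hΓ0 (norm_nonneg _)) (norm_nonneg _)
  have hα₂nn : ∀ n, 0 ≤ α₂ n := fun n =>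
    add_nonneg (mul_nonneg hΓ0 (norm_nonneg _)) (norm_nonneg _)
  have hE₁nn : ∀ n, 0 ≤ E₁ n := fun n =>
    add_nonneg (add_nonneg (hα₁nn n) (mul_nonneg (mul_nonneg hΓ0 hL0.le) (hα₂nn n)))
      (mul_nonneg hΓ0 (add_nonneg (norm_nonneg _) (norm_nonneg _)))
  have hE₂nn : ∀ n, 0 ≤ E₂ n := fun n =>
    add_nonneg (add_nonneg (hα₂nn n) (mul_nonneg (mul_nonneg hΓ0 hL0.le) (hα₁nn n)))
      (mul_nonneg hΓ0 (add_nonneg (norm_nonneg _) (norm_nonneg _)))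
  have herrnn : ∀ n, 0 ≤ err n := fun n => add_nonneg (hE₁nn n) (hE₂nn n)
  have hΦnn : ∀ n, 0 ≤ Φ n := fun n => add_nonneg (sq_nonneg _) (sq_nonneg _)
  have hΔnn : ∀ n, 0 ≤ Δ n := fun n => add_nonneg (sq_nonneg _) (sq_nonneg _)
  -- key one-step inequality
  have hkey : ∀ n, ‖XX n - xs‖ ^ 2 + ‖VV n - vs‖ ^ 2 ≤ Φ n - ε * Δ n := by
    intro n
    obtain ⟨u₁, hu₁, hw₁⟩ := hJA n (x n - γ n • L' (v n) + γ n • z)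
    obtain ⟨u₂, hu₂, hw₂⟩ := hJB n (v n + γ n • L (x n) - γ n • r)
    exact keyIneq hA.1 hB.1 L z r xs u hu vs hvs hz (γ n) ε (hγpos n) (hγL n) hε0 hε1
      (x n) (P₁ n) (v n) (P₂ n) u₁ hu₁ hw₁ u₂ hu₂ hw₂
  -- inexactness bounds
  have hp₁diff : ∀ n, ‖p₁ n - P₁ n‖ ≤ α₁ n := by
    intro n
    have hne := resolvent_nonexp hA.1 (hγpos n) (hJA n) (y₁ n + γ n • z)
      (x n - γ n • L' (v n) + γ n • z)
    rw [← hP₁n n] at hne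
    have harg : (y₁ n + γ n • z) - (x n - γ n • L' (v n) + γ n • z) = -(γ n • a₁ n) := by
      rw [hy₁ n]; module
    have hid : p₁ n - P₁ n = (JA n (y₁ n + γ n • z) - P₁ n) + b₁ n := by
      rw [hp₁ n]; abel
    rw [hid]
    calc ‖(JA n (y₁ n + γ n • z) - P₁ n) + b₁ n‖
        ≤ ‖JA n (y₁ n + γ n • z) - P₁ n‖ + ‖b₁ n‖ := norm_add_le _ _
      _ ≤ ‖(y₁ n + γ n • z) - (x n - γ n • L' (v n) + γ n • z)‖ + ‖b₁ n‖ := by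
          linarith [hne]
      _ = γ n * ‖a₁ n‖ + ‖b₁ n‖ := by
          rw [harg, norm_neg, norm_smul, Real.norm_eq_abs, abs_of_pos (hγpos n)]
      _ ≤ Γ * ‖a₁ n‖ + ‖b₁ n‖ := by
          have := mul_le_mul_of_nonneg_right (hγΓ n) (norm_nonneg (a₁ n)); linarith
  have hp₂diff : ∀ n, ‖p₂ n - P₂ n‖ ≤ α₂ n := by
    intro n
    have hne := resolvent_nonexp hBinv (hγpos n) (hJB n) (y₂ n - γ n • r)
      (v n + γ n • L (x n) - γ n • r)
    rw [← hP₂n n] at hne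
    have harg : (y₂ n - γ n • r) - (v n + γ n • L (x n) - γ n • r) = γ n • a₂ n := by
      rw [hy₂ n]; module
    have hid : p₂ n - P₂ n = (JB n (y₂ n - γ n • r) - P₂ n) + b₂ n := by
      rw [hp₂ n]; abel
    rw [hid]
    calc ‖(JB n (y₂ n - γ n • r) - P₂ n) + b₂ n‖
        ≤ ‖JB n (y₂ n - γ n • r) - P₂ n‖ + ‖b₂ n‖ := norm_add_le _ _
      _ ≤ ‖(y₂ n - γ n • r) - (v n + γ n • L (x n) - γ n • r)‖ + ‖b₂ n‖ := by
          linarith [hne]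
      _ = γ n * ‖a₂ n‖ + ‖b₂ n‖ := by
          rw [harg, norm_smul, Real.norm_eq_abs, abs_of_pos (hγpos n)]
      _ ≤ Γ * ‖a₂ n‖ + ‖b₂ n‖ := by
          have := mul_le_mul_of_nonneg_right (hγΓ n) (norm_nonneg (a₂ n)); linarith
  -- deviation from the exact update
  have hxdev : ∀ n, ‖x (n+1) - XX n‖ ≤ E₁ n := by
    intro n
    have hid : x (n+1) - XX n
        = (p₁ n - P₁ n) + γ n • L' (P₂ n - p₂ n) + γ n • (a₁ n - c₁ n) := by
      rw [hx n, hy₁ n, hq₁ n, hXXdef]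
      simp only [map_sub]
      module
    rw [hid]
    have t2 : ‖γ n • L' (P₂ n - p₂ n)‖ ≤ Γ * ‖L‖ * α₂ n := by
      rw [norm_smul, Real.norm_eq_abs, abs_of_pos (hγpos n)]
      have h1 : ‖L' (P₂ n - p₂ n)‖ ≤ ‖L‖ * ‖P₂ n - p₂ n‖ := by
        have h := L'.le_opNorm (P₂ n - p₂ n); rwa [hL'norm] at h
      have h2 : ‖P₂ n - p₂ n‖ ≤ α₂ n := by rw [norm_sub_rev]; exact hp₂diff n
      calc γ n * ‖L' (P₂ n - p₂ n)‖ ≤ Γ * (‖L‖ * ‖P₂ n - p₂ n‖) :=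
            mul_le_mul (hγΓ n) h1 (norm_nonneg _) hΓ0
        _ ≤ Γ * (‖L‖ * α₂ n) := by
            have := mul_le_mul_of_nonneg_left (mul_le_mul_of_nonneg_left h2 hL0.le) hΓ0
            linarith
        _ = Γ * ‖L‖ * α₂ n := by ring
    have t3 : ‖γ n • (a₁ n - c₁ n)‖ ≤ Γ * (‖a₁ n‖ + ‖c₁ n‖) := by
      rw [norm_smul, Real.norm_eq_abs, abs_of_pos (hγpos n)]
      exact mul_le_mul (hγΓ n) (norm_sub_le _ _) (norm_nonneg _) hΓ0
    calc ‖(p₁ n - P₁ n) + γ n • L' (P₂ n - p₂ n) + γ n • (a₁ n - c₁ n)‖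
        ≤ ‖p₁ n - P₁ n‖ + ‖γ n • L' (P₂ n - p₂ n)‖ + ‖γ n • (a₁ n - c₁ n)‖ :=
          norm_add₃_le
      _ ≤ α₁ n + Γ * ‖L‖ * α₂ n + Γ * (‖a₁ n‖ + ‖c₁ n‖) := by
          have := hp₁diff n; linarith
  have hvdev : ∀ n, ‖v (n+1) - VV n‖ ≤ E₂ n := by
    intro n
    have hid : v (n+1) - VV n
        = (p₂ n - P₂ n) + γ n • L (p₁ n - P₁ n) + γ n • (c₂ n - a₂ n) := by
      rw [hv n, hy₂ n, hq₂ n, hVVdef]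
      simp only [map_sub]
      module
    rw [hid]
    have t2 : ‖γ n • L (p₁ n - P₁ n)‖ ≤ Γ * ‖L‖ * α₁ n := by
      rw [norm_smul, Real.norm_eq_abs, abs_of_pos (hγpos n)]
      have h1 : ‖L (p₁ n - P₁ n)‖ ≤ ‖L‖ * ‖p₁ n - P₁ n‖ := L.le_opNorm _
      have h2 : ‖p₁ n - P₁ n‖ ≤ α₁ n := hp₁diff n
      calc γ n * ‖L (p₁ n - P₁ n)‖ ≤ Γ * (‖L‖ * ‖p₁ n - P₁ n‖) :=
            mul_le_mul (hγΓ n) h1 (norm_nonneg _) hΓ0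
        _ ≤ Γ * (‖L‖ * α₁ n) := by
            have := mul_le_mul_of_nonneg_left (mul_le_mul_of_nonneg_left h2 hL0.le) hΓ0
            linarith
        _ = Γ * ‖L‖ * α₁ n := by ring
    have t3 : ‖γ n • (c₂ n - a₂ n)‖ ≤ Γ * (‖a₂ n‖ + ‖c₂ n‖) := by
      rw [norm_smul, Real.norm_eq_abs, abs_of_pos (hγpos n)]
      have h := norm_sub_le (c₂ n) (a₂ n)
      have : γ n * ‖c₂ n - a₂ n‖ ≤ Γ * (‖c₂ n‖ + ‖a₂ n‖) :=
        mul_le_mul (hγΓ n) h (norm_nonneg _) hΓ0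
      linarith
    calc ‖(p₂ n - P₂ n) + γ n • L (p₁ n - P₁ n) + γ n • (c₂ n - a₂ n)‖
        ≤ ‖p₂ n - P₂ n‖ + ‖γ n • L (p₁ n - P₁ n)‖ + ‖γ n • (c₂ n - a₂ n)‖ :=
          norm_add₃_le
      _ ≤ α₂ n + Γ * ‖L‖ * α₁ n + Γ * (‖a₂ n‖ + ‖c₂ n‖) := by
          have := hp₂diff n; linarith
  -- summability of the error sequence
  have hαsum₁ : Summable α₁ := (ha₁.mul_left Γ).add hb₁
  have hαsum₂ : Summable α₂ := (ha₂.mul_left Γ).add hb₂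
  have herrsum : Summable err := by
    have h1 : Summable E₁ :=
      (hαsum₁.add (hαsum₂.mul_left (Γ * ‖L‖))).add ((ha₁.add hc₁).mul_left Γ)
    have h2 : Summable E₂ :=
      (hαsum₂.add (hαsum₁.mul_left (Γ * ‖L‖))).add ((ha₂.add hc₂).mul_left Γ)
    exact h1.add h2
  set Etot : ℝ := ∑' n, err n with hEdef
  have hE0 : 0 ≤ Etot := tsum_nonneg herrnn
  have herrle : ∀ n, err n ≤ Etot := fun n => Summable.le_tsum herrsum n fun m _ => herrnn m
  have hpart : ∀ n, ∑ k ∈ Finset.range n, err k ≤ Etot := fun n =>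
    Summable.sum_le_tsum _ (fun m _ => herrnn m) herrsum
  -- Fejér-type estimates
  set d : ℕ → ℝ := fun n => Real.sqrt (Φ n) with hddef
  have hdnn : ∀ n, 0 ≤ d n := fun n => Real.sqrt_nonneg _
  have hd2 : ∀ n, d n ^ 2 = Φ n := fun n => Real.sq_sqrt (hΦnn n)
  have hcomp₁ : ∀ n, ‖x (n+1) - xs‖ ≤ ‖XX n - xs‖ + E₁ n := by
    intro n
    calc ‖x (n+1) - xs‖ = ‖(XX n - xs) + (x (n+1) - XX n)‖ := by
          rw [show (XX n - xs) + (x (n+1) - XX n) = x (n+1) - xs by abel]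
      _ ≤ ‖XX n - xs‖ + ‖x (n+1) - XX n‖ := norm_add_le _ _
      _ ≤ ‖XX n - xs‖ + E₁ n := by linarith [hxdev n]
  have hcomp₂ : ∀ n, ‖v (n+1) - vs‖ ≤ ‖VV n - vs‖ + E₂ n := by
    intro n
    calc ‖v (n+1) - vs‖ = ‖(VV n - vs) + (v (n+1) - VV n)‖ := by
          rw [show (VV n - vs) + (v (n+1) - VV n) = v (n+1) - vs by abel]
      _ ≤ ‖VV n - vs‖ + ‖v (n+1) - VV n‖ := norm_add_le _ _
      _ ≤ ‖VV n - vs‖ + E₂ n := by linarith [hvdev n]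
  have hsumle : ∀ n, ‖XX n - xs‖ ^ 2 + ‖VV n - vs‖ ^ 2 ≤ d n ^ 2 := by
    intro n
    rw [hd2 n]
    have h := hkey n
    have h2 := mul_nonneg hε0.le (hΔnn n)
    linarith
  have hXXle : ∀ n, ‖XX n - xs‖ ≤ d n := fun n =>
    le_of_sq_add_sq_le (norm_nonneg _) (hdnn n) (hsumle n)
  have hVVle : ∀ n, ‖VV n - vs‖ ≤ d n := fun n =>
    le_of_sq_add_sq_le (b := ‖XX n - xs‖) (norm_nonneg _) (hdnn n) (by linarith [hsumle n])
  have hΦsucc : ∀ n, Φ (n+1) = ‖x (n+1) - xs‖ ^ 2 + ‖v (n+1) - vs‖ ^ 2 := fun n => rfl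
  have herreq : ∀ n, err n = E₁ n + E₂ n := fun n => rfl
  have hΦstep1 : ∀ n, Φ (n+1) ≤ (d n + err n) ^ 2 := by
    intro n
    have main := fejer_aux (norm_nonneg (x (n+1) - xs)) (norm_nonneg (v (n+1) - vs))
      (hE₁nn n) (hE₂nn n) (hcomp₁ n) (hcomp₂ n) (norm_nonneg _) (norm_nonneg _)
      (hsumle n) (hXXle n) (hVVle n) (le_refl (E₁ n + E₂ n))
    calc Φ (n+1) = ‖x (n+1) - xs‖ ^ 2 + ‖v (n+1) - vs‖ ^ 2 := hΦsucc n
      _ ≤ d n ^ 2 + (2 * d n + (E₁ n + E₂ n)) * (E₁ n + E₂ n) := main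
      _ = (d n + (E₁ n + E₂ n)) ^ 2 := by ring
      _ = (d n + err n) ^ 2 := by rw [herreq n]
  have hd1 : ∀ n, d (n+1) ≤ d n + err n := by
    intro n
    calc d (n+1) = Real.sqrt (Φ (n+1)) := rfl
      _ ≤ Real.sqrt ((d n + err n) ^ 2) := Real.sqrt_le_sqrt (hΦstep1 n)
      _ = d n + err n := Real.sqrt_sq (add_nonneg (hdnn n) (herrnn n))
  have hdbound : ∀ n, d n ≤ d 0 + Etot := by
    have h : ∀ n, d n ≤ d 0 + ∑ k ∈ Finset.range n, err k := by
      intro n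
      induction n with
      | zero => simp
      | succ m ih =>
        rw [Finset.sum_range_succ]
        have := hd1 m
        linarith
    intro n
    have := hpart n
    linarith [h n]
  set M : ℝ := d 0 + Etot with hMdef
  have hM0 : 0 ≤ M := add_nonneg (hdnn 0) hE0
  have hΦstep2 : ∀ n, Φ (n+1) ≤ Φ n - ε * Δ n + (2 * M + Etot) * err n := by
    intro n
    have hXa : ‖XX n - xs‖ ≤ M := (hXXle n).trans (hdbound n)
    have hVa : ‖VV n - vs‖ ≤ M := (hVVle n).trans (hdbound n)
    have hEt : E₁ n + E₂ n ≤ Etot := by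
      have h := herrle n
      rw [herreq n] at h
      exact h
    have main := fejer_aux (norm_nonneg (x (n+1) - xs)) (norm_nonneg (v (n+1) - vs))
      (hE₁nn n) (hE₂nn n) (hcomp₁ n) (hcomp₂ n) (norm_nonneg _) (norm_nonneg _)
      (hkey n) hXa hVa hEt
    calc Φ (n+1) = ‖x (n+1) - xs‖ ^ 2 + ‖v (n+1) - vs‖ ^ 2 := hΦsucc n
      _ ≤ Φ n - ε * Δ n + (2 * M + Etot) * (E₁ n + E₂ n) := main
      _ = Φ n - ε * Δ n + (2 * M + Etot) * err n := by rw [herreq n]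
  have htel : ∀ n, Φ n + ε * ∑ k ∈ Finset.range n, Δ k
      ≤ Φ 0 + (2 * M + Etot) * ∑ k ∈ Finset.range n, err k := by
    intro n
    induction n with
    | zero => simp
    | succ m ih =>
      rw [Finset.sum_range_succ, Finset.sum_range_succ]
      have h := hΦstep2 m
      linarith [ih, h]
  have hΔsumbound : ∀ n, ∑ k ∈ Finset.range n, Δ k ≤ (Φ 0 + (2 * M + Etot) * Etot) / ε := by
    intro n
    rw [le_div_iff₀ hε0]
    have h1 := htel n
    have h2 : (2 * M + Etot) * ∑ k ∈ Finset.range n, err k ≤ (2 * M + Etot) * Etot :=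
      mul_le_mul_of_nonneg_left (hpart n) (by linarith)
    have h3 := hΦnn n
    linarith [h1, h2, h3]
  have hΔsum : Summable Δ := summable_of_sum_range_le hΔnn hΔsumbound
  have hΔ0 : Tendsto Δ atTop (nhds 0) := hΔsum.tendsto_atTop_zero
  -- residual convergence
  have hres₁ : Tendsto (fun n => ‖x n - P₁ n‖) atTop (nhds 0) := by
    have hsq : Tendsto (fun n => ‖x n - P₁ n‖ ^ 2) atTop (nhds 0) := by
      refine squeeze_zero (fun n => sq_nonneg _) (fun n => ?_) hΔ0
      exact le_add_of_nonneg_right (sq_nonneg _)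
    have h := (Real.continuous_sqrt.tendsto 0).comp hsq
    have heq : (fun n => Real.sqrt (‖x n - P₁ n‖ ^ 2)) = fun n => ‖x n - P₁ n‖ :=
      funext fun n => Real.sqrt_sq (norm_nonneg _)
    have h2 : Tendsto (fun n => Real.sqrt (‖x n - P₁ n‖ ^ 2)) atTop (nhds 0) := by
      simpa [Function.comp_def] using h
    rwa [heq] at h2
  have hres₂ : Tendsto (fun n => ‖v n - P₂ n‖) atTop (nhds 0) := by
    have hsq : Tendsto (fun n => ‖v n - P₂ n‖ ^ 2) atTop (nhds 0) := by
      refine squeeze_zero (fun n => sq_nonneg _) (fun n => ?_) hΔ0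
      exact le_add_of_nonneg_left (sq_nonneg _)
    have h := (Real.continuous_sqrt.tendsto 0).comp hsq
    have heq : (fun n => Real.sqrt (‖v n - P₂ n‖ ^ 2)) = fun n => ‖v n - P₂ n‖ :=
      funext fun n => Real.sqrt_sq (norm_nonneg _)
    have h2 : Tendsto (fun n => Real.sqrt (‖v n - P₂ n‖ ^ 2)) atTop (nhds 0) := by
      simpa [Function.comp_def] using h
    rwa [heq] at h2
  have hα₁0 : Tendsto α₁ atTop (nhds 0) := hαsum₁.tendsto_atTop_zero
  have hα₂0 : Tendsto α₂ atTop (nhds 0) := hαsum₂.tendsto_atTop_zero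
  constructor
  · rw [tendsto_zero_iff_norm_tendsto_zero]
    have hb : ∀ n, ‖x n - p₁ n‖ ≤ ‖x n - P₁ n‖ + α₁ n := by
      intro n
      calc ‖x n - p₁ n‖ = ‖(x n - P₁ n) - (p₁ n - P₁ n)‖ := by
            rw [show (x n - P₁ n) - (p₁ n - P₁ n) = x n - p₁ n by abel]
        _ ≤ ‖x n - P₁ n‖ + ‖p₁ n - P₁ n‖ := norm_sub_le _ _
        _ ≤ ‖x n - P₁ n‖ + α₁ n := by linarith [hp₁diff n]
    have hg : Tendsto (fun n => ‖x n - P₁ n‖ + α₁ n) atTop (nhds 0) := by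
      simpa using hres₁.add hα₁0
    exact squeeze_zero (fun n => norm_nonneg _) hb hg
  · rw [tendsto_zero_iff_norm_tendsto_zero]
    have hb : ∀ n, ‖v n - p₂ n‖ ≤ ‖v n - P₂ n‖ + α₂ n := by
      intro n
      calc ‖v n - p₂ n‖ = ‖(v n - P₂ n) - (p₂ n - P₂ n)‖ := by
            rw [show (v n - P₂ n) - (p₂ n - P₂ n) = v n - p₂ n by abel]
        _ ≤ ‖v n - P₂ n‖ + ‖p₂ n - P₂ n‖ := norm_sub_le _ _
        _ ≤ ‖v n - P₂ n‖ + α₂ n := by linarith [hp₂diff n]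
    have hg : Tendsto (fun n => ‖v n - P₂ n‖ + α₂ n) atTop (nhds 0) := by
      simpa using hres₂.add hα₂0
    exact squeeze_zero (fun n => norm_nonneg _) hb hg
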